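/- arXiv:2105.11431 — 6 statements merged into one kernel-verified Lean document; each statement's English description precedes it below -/
import Mathlib

section
/- For every position (x,y) ∈ [n]², the number of squares (x',y') ∈ [n]² \ {(x,y)} with x'+y' ≡ x+y (mod n) but x'+y' ≠ x+y is exactly |x+y-(n+1)|, and the number of squares with x'-y' ≡ x-y (mod n) but x'-y' ≠ x-y is exactly |x-y|. -/
/-!
Two squares of the board have coordinate sums differing by less than `2n`, so a square on the
toroidal sum-diagonal of `(x, y)` but off its ordinary one lies on one of the two ordinary
diagonals `x' + y' = x + y ± n`. These contain `(n + 1 - (x + y))⁺` and `(x + y - (n + 1))⁺`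
squares, which add up to `|x + y - (n + 1)|`. Differences are handled alike, with the lines
`x' - y' = x - y ± n` holding `(y - x)⁺` and `(x - y)⁺` squares.
-/

open scoped Classical

/-- The n×n board, identified with {1,…,n}². -/
noncomputable def board (n : ℕ) : Finset (ℤ × ℤ) := Finset.Icc 1 (n : ℤ) ×ˢ Finset.Icc 1 (n : ℤ)

open Finset

theorem Int.modEq_and_ne_iff_of_abs_sub_lt {n a b : ℤ} (h : |a - b| < 2 * n) :
    a ≡ b [ZMOD n] ∧ a ≠ b ↔ a = b + n ∨ a = b - n := by
  rw [abs_lt] at h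
  constructor
  · rintro ⟨hab, hne⟩
    obtain ⟨k, hk⟩ := Int.modEq_iff_dvd.mp hab
    have hk_ne : k ≠ 0 := by rintro rfl; omega
    have hk_gt : -2 < k := by nlinarith
    have hk_lt : k < 2 := by nlinarith
    obtain rfl | rfl : k = 1 ∨ k = -1 := by omega
    all_goals omega
  · rintro (rfl | rfl)
    · exact ⟨Int.modEq_iff_dvd.mpr ⟨-1, by ring⟩, by omega⟩
    · exact ⟨Int.modEq_iff_dvd.mpr ⟨1, by ring⟩, by omega⟩

theorem Finset.card_filter_modEq_ne_of_abs_sub_lt {α : Type*} (s : Finset α) (g : α → ℤ)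
    {n c : ℤ} (hs : ∀ p ∈ s, |g p - c| < 2 * n) :
    #{p ∈ s | g p ≡ c [ZMOD n] ∧ g p ≠ c} = #{p ∈ s | g p = c + n} + #{p ∈ s | g p = c - n} := by
  have hdisj : Disjoint {p ∈ s | g p = c + n} {p ∈ s | g p = c - n} :=
    disjoint_filter.mpr fun p hp h₁ h₂ => by
      have := hs p hp
      rw [abs_lt] at this
      omega
  rw [← card_union_of_disjoint hdisj, ← filter_or]
  exact congrArg card (filter_congr fun p hp => Int.modEq_and_ne_iff_of_abs_sub_lt (hs p hp))

theorem Finset.card_filter_product_snd_eq {α β : Type*} [DecidableEq β] (s : Finset α)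
    (t : Finset β) (f : α → β) : #{p ∈ s ×ˢ t | p.2 = f p.1} = #{a ∈ s | f a ∈ t} :=
  card_nbij' Prod.fst (fun a => (a, f a))
    (fun p hp => by
      simp only [coe_filter, mem_product, Set.mem_ofPred_eq] at hp ⊢
      exact ⟨hp.1.1, hp.2 ▸ hp.1.2⟩)
    (fun a => by simp +contextual)
    (fun p => by simp +contextual [Prod.ext_iff])
    (fun _ _ => rfl)

theorem card_board_filter_add_eq (n : ℕ) (t : ℤ) :
    (#{p ∈ board n | p.1 + p.2 = t} : ℤ) = (min (n : ℤ) (t - 1) + 1 - max 1 (t - n)).toNat := by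
  have : {p ∈ board n | p.1 + p.2 = t} = {p ∈ board n | p.2 = t - p.1} :=
    filter_congr fun p _ => by omega
  rw [this, board, card_filter_product_snd_eq, ← Int.card_Icc]
  congr 2
  ext a
  simp only [mem_filter, mem_Icc]
  omega

theorem card_board_filter_sub_eq (n : ℕ) (t : ℤ) :
    (#{p ∈ board n | p.1 - p.2 = t} : ℤ) = (min (n : ℤ) (n + t) + 1 - max 1 (1 + t)).toNat := by
  have : {p ∈ board n | p.1 - p.2 = t} = {p ∈ board n | p.2 = p.1 - t} :=
    filter_congr fun p _ => by omega
  rw [this, board, card_filter_product_snd_eq _ _ (· - t), ← Int.card_Icc]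
  congr 2
  ext a
  simp only [mem_filter, mem_Icc]
  omega

theorem card_far_add_diagonal (n : ℕ) {x y : ℤ} (hx : x ∈ Icc 1 (n : ℤ))
    (hy : y ∈ Icc 1 (n : ℤ)) :
    (#{p ∈ board n | p ≠ (x, y) ∧ p.1 + p.2 ≡ x + y [ZMOD n] ∧ p.1 + p.2 ≠ x + y} : ℤ) =
      |x + y - ((n : ℤ) + 1)| := by
  rw [mem_Icc] at hx hy
  have hbound : ∀ p ∈ board n, |p.1 + p.2 - (x + y)| < 2 * n := fun p hp => by
    simp only [board, mem_product, mem_Icc] at hp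
    rw [abs_lt]; omega
  rw [filter_congr fun p _ => and_iff_right_of_imp fun h => by rintro rfl; exact h.2 rfl,
    card_filter_modEq_ne_of_abs_sub_lt _ _ hbound, Nat.cast_add, card_board_filter_add_eq,
    card_board_filter_add_eq, abs_eq_max_neg]
  omega

theorem card_far_sub_diagonal (n : ℕ) {x y : ℤ} (hx : x ∈ Icc 1 (n : ℤ))
    (hy : y ∈ Icc 1 (n : ℤ)) :
    (#{p ∈ board n | p ≠ (x, y) ∧ p.1 - p.2 ≡ x - y [ZMOD n] ∧ p.1 - p.2 ≠ x - y} : ℤ) =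
      |x - y| := by
  rw [mem_Icc] at hx hy
  have hbound : ∀ p ∈ board n, |p.1 - p.2 - (x - y)| < 2 * n := fun p hp => by
    simp only [board, mem_product, mem_Icc] at hp
    rw [abs_lt]; omega
  rw [filter_congr fun p _ => and_iff_right_of_imp fun h => by rintro rfl; exact h.2 rfl,
    card_filter_modEq_ne_of_abs_sub_lt _ _ hbound, Nat.cast_add, card_board_filter_sub_eq,
    card_board_filter_sub_eq, abs_eq_max_neg]
  omega

theorem far_diagonal_card_general (n : ℕ) (x y : ℤ)
    (hx : x ∈ Finset.Icc 1 (n : ℤ)) (hy : y ∈ Finset.Icc 1 (n : ℤ)) :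
    (((board n).filter (fun p => p ≠ (x, y) ∧
        p.1 + p.2 ≡ x + y [ZMOD (n : ℤ)] ∧ p.1 + p.2 ≠ x + y)).card : ℤ)
      = |x + y - ((n : ℤ) + 1)| ∧
    (((board n).filter (fun p => p ≠ (x, y) ∧
        p.1 - p.2 ≡ x - y [ZMOD (n : ℤ)] ∧ p.1 - p.2 ≠ x - y)).card : ℤ)
      = |x - y| :=
  ⟨card_far_add_diagonal n hx hy, card_far_sub_diagonal n hx hy⟩

/-- The number of squares sharing a toroidal, but not a non-toroidal, diagonal with (x,y)
is |x+y-(n+1)| for the sum-type, and |x-y| for the difference-type. -/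
theorem far_diagonal_card (n : ℕ) (hn : 0 < n) (x y : ℤ)
    (hx : x ∈ Finset.Icc 1 (n : ℤ)) (hy : y ∈ Finset.Icc 1 (n : ℤ)) :
    (((board n).filter (fun p => p ≠ (x, y) ∧
        p.1 + p.2 ≡ x + y [ZMOD (n : ℤ)] ∧ p.1 + p.2 ≠ x + y)).card : ℤ)
      = |x + y - ((n : ℤ) + 1)| ∧
    (((board n).filter (fun p => p ≠ (x, y) ∧
        p.1 - p.2 ≡ x - y [ZMOD (n : ℤ)] ∧ p.1 - p.2 ≠ x - y)).card : ℤ)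
      = |x - y| :=
  far_diagonal_card_general n x y hx hy
end

section
/- Let Q ⊆ [n]² be a partial n-queens configuration, let (r,c) ∈ [n]², and let (x,y) ∈ Q be an absorber for (r,c) in Q: i.e., (x,y) shares no diagonal with (r,c), and none of the four diagonals through (r,y) and (x,c) contains a point of Q other than possibly (x,y) itself. Then Q' := (Q \ {(x,y)}) ∪ {(r,y),(x,c)} is a partial n-queens configuration of size |Q|+1 that covers exactly the rows covered by Q together with row r, and exactly the columns covered by Q together with column c, provided row r and column c are not covered by Q. -/
open scoped Classical

/-- A partial n-queens configuration: at most one queen in each row, column, and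
(non-toroidal) diagonal. -/
def IsPartialConfig (n : ℕ) (Q : Finset (ℤ × ℤ)) : Prop :=
  Q ⊆ board n ∧ ∀ p ∈ Q, ∀ q ∈ Q, p ≠ q →
    p.1 ≠ q.1 ∧ p.2 ≠ q.2 ∧ p.1 + p.2 ≠ q.1 + q.2 ∧ p.1 - p.2 ≠ q.1 - q.2

/-!
Removing the absorber `(x, y)` frees its row `x` and its column `y`, so the two new queens
`(r, y)` and `(x, c)` meet the rest of `Q` in no row or column, and by the absorber condition
in no diagonal. They do not attack each other either: `(r, y)` and `(x, c)` share a diagonal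
exactly when `(x, y)` and `(r, c)` share the other one.
-/

open Finset

def NonAttacking (p q : ℤ × ℤ) : Prop :=
  p.1 ≠ q.1 ∧ p.2 ≠ q.2 ∧ p.1 + p.2 ≠ q.1 + q.2 ∧ p.1 - p.2 ≠ q.1 - q.2

theorem NonAttacking.symm {p q : ℤ × ℤ} (h : NonAttacking p q) : NonAttacking q p :=
  ⟨h.1.symm, h.2.1.symm, h.2.2.1.symm, h.2.2.2.symm⟩

namespace IsPartialConfig

variable {n : ℕ} {Q : Finset (ℤ × ℤ)}

theorem eq_of_fst_eq (hQ : IsPartialConfig n Q) {p q : ℤ × ℤ} (hp : p ∈ Q) (hq : q ∈ Q)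
    (h : p.1 = q.1) : p = q := by
  by_contra hpq
  exact (hQ.2 p hp q hq hpq).1 h

theorem eq_of_snd_eq (hQ : IsPartialConfig n Q) {p q : ℤ × ℤ} (hp : p ∈ Q) (hq : q ∈ Q)
    (h : p.2 = q.2) : p = q := by
  by_contra hpq
  exact (hQ.2 p hp q hq hpq).2.1 h

theorem mono (hQ : IsPartialConfig n Q) {P : Finset (ℤ × ℤ)} (hPQ : P ⊆ Q) :
    IsPartialConfig n P :=
  ⟨hPQ.trans hQ.1, fun p hp q hq => hQ.2 p (hPQ hp) q (hPQ hq)⟩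

theorem insert (hQ : IsPartialConfig n Q) {p : ℤ × ℤ} (hp : p ∈ board n)
    (hfree : ∀ q ∈ Q, q ≠ p → NonAttacking p q) : IsPartialConfig n (insert p Q) := by
  refine ⟨insert_subset hp hQ.1, ?_⟩
  intro u hu v hv huv
  rw [mem_insert] at hu hv
  rcases hu with rfl | hu <;> rcases hv with rfl | hv
  · exact absurd rfl huv
  · exact hfree v hv (Ne.symm huv)
  · exact (hfree u hu huv).symm
  · exact hQ.2 u hu v hv huv

end IsPartialConfig

theorem mk_mem_board {n : ℕ} {a b c d : ℤ} (hab : (a, b) ∈ board n) (hcd : (c, d) ∈ board n) :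
    (a, d) ∈ board n := by
  simp only [board, mem_product, mem_Icc] at *
  exact ⟨hab.1, hcd.2⟩

section Swap

variable {α β : Type*} [DecidableEq α] {s : Finset α} {p u v : α}

theorem card_erase_union_pair (hp : p ∈ s) (hu : u ∉ s) (hv : v ∉ s) (huv : u ≠ v) :
    (s.erase p ∪ {u, v}).card = s.card + 1 := by
  have hdisj : Disjoint (s.erase p) {u, v} := by
    simp only [disjoint_insert_right, disjoint_singleton_right, mem_erase, hu, hv, and_false,
      not_false_eq_true, and_self]
  have hs : 0 < s.card := card_pos.2 ⟨p, hp⟩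
  rw [card_union_of_disjoint hdisj, card_erase_of_mem hp, card_pair huv]
  omega

theorem exists_mem_erase_union_pair_iff (f : α → β) (hp : p ∈ s) (hv : f v = f p) (b : β) :
    (∃ q ∈ s.erase p ∪ {u, v}, f q = b) ↔ (∃ q ∈ s, f q = b) ∨ b = f u := by
  constructor
  · rintro ⟨q, hq, rfl⟩
    rcases mem_union.1 hq with hq | hq
    · exact Or.inl ⟨q, mem_of_mem_erase hq, rfl⟩
    · rcases mem_insert.1 hq with rfl | hq
      · exact Or.inr rfl
      · rw [mem_singleton.1 hq]
        exact Or.inl ⟨p, hp, hv.symm⟩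
  · rintro (⟨q, hq, rfl⟩ | rfl)
    · by_cases hqp : q = p
      · exact ⟨v, by simp, hqp ▸ hv⟩
      · exact ⟨q, mem_union_left _ (mem_erase.2 ⟨hqp, hq⟩), rfl⟩
    · exact ⟨u, by simp, rfl⟩

end Swap

theorem isPartialConfig_absorber_swap {n : ℕ} {Q : Finset (ℤ × ℤ)} (hQ : IsPartialConfig n Q)
    {r c x y : ℤ} (hrc : (r, c) ∈ board n) (hxy : (x, y) ∈ Q)
    (hd1 : x + y ≠ r + c) (hd2 : x - y ≠ r - c)
    (hfree : ∀ q ∈ Q, q ≠ (x, y) →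
      q.1 + q.2 ≠ r + y ∧ q.1 - q.2 ≠ r - y ∧ q.1 + q.2 ≠ x + c ∧ q.1 - q.2 ≠ x - c)
    (hrow : ∀ q ∈ Q, q.1 ≠ r) (hcol : ∀ q ∈ Q, q.2 ≠ c) :
    IsPartialConfig n ((Q.erase (x, y)) ∪ {(r, y), (x, c)}) := by
  have hxy_board := hQ.1 hxy
  have hxc : ∀ q ∈ Q.erase (x, y), NonAttacking (x, c) q := by
    intro q hq
    obtain ⟨hqxy, hqQ⟩ := mem_erase.1 hq
    exact ⟨fun h => hqxy (hQ.eq_of_fst_eq hqQ hxy h.symm), (hcol q hqQ).symm,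
      (hfree q hqQ hqxy).2.2.1.symm, (hfree q hqQ hqxy).2.2.2.symm⟩
  have hry : ∀ q ∈ Q.erase (x, y), NonAttacking (r, y) q := by
    intro q hq
    obtain ⟨hqxy, hqQ⟩ := mem_erase.1 hq
    exact ⟨(hrow q hqQ).symm, fun h => hqxy (hQ.eq_of_snd_eq hqQ hxy h.symm),
      (hfree q hqQ hqxy).1.symm, (hfree q hqQ hqxy).2.1.symm⟩
  have hry_xc : NonAttacking (r, y) (x, c) :=
    ⟨(hrow (x, y) hxy).symm, hcol (x, y) hxy, by dsimp only; omega, by dsimp only; omega⟩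
  have hswap : Q.erase (x, y) ∪ {(r, y), (x, c)} =
      insert (r, y) (insert (x, c) (Q.erase (x, y))) := by
    rw [union_comm, insert_eq, insert_eq, insert_eq, union_assoc]
  rw [hswap]
  refine ((hQ.mono (erase_subset _ _)).insert (mk_mem_board hxy_board hrc)
    fun q hq _ => hxc q hq).insert (mk_mem_board hrc hxy_board) ?_
  intro q hq _
  rcases mem_insert.1 hq with rfl | hq
  · exact hry_xc
  · exact hry q hq

/-- An absorber swap yields a partial configuration covering additionally exactly
row r and column c. -/
theorem absorber_swap (n : ℕ) (Q : Finset (ℤ × ℤ)) (hQ : IsPartialConfig n Q)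
    (r c x y : ℤ) (hrc : (r, c) ∈ board n) (hxy : (x, y) ∈ Q)
    (hd1 : x + y ≠ r + c) (hd2 : x - y ≠ r - c)
    (hfree : ∀ q ∈ Q, q ≠ (x, y) →
      q.1 + q.2 ≠ r + y ∧ q.1 - q.2 ≠ r - y ∧ q.1 + q.2 ≠ x + c ∧ q.1 - q.2 ≠ x - c)
    (hrow : ∀ q ∈ Q, q.1 ≠ r) (hcol : ∀ q ∈ Q, q.2 ≠ c) :
    IsPartialConfig n ((Q.erase (x, y)) ∪ {(r, y), (x, c)}) ∧
    ((Q.erase (x, y)) ∪ {(r, y), (x, c)}).card = Q.card + 1 ∧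
    (∀ a : ℤ, (∃ q ∈ (Q.erase (x, y)) ∪ {(r, y), (x, c)}, q.1 = a) ↔
      (∃ q ∈ Q, q.1 = a) ∨ a = r) ∧
    (∀ b : ℤ, (∃ q ∈ (Q.erase (x, y)) ∪ {(r, y), (x, c)}, q.2 = b) ↔
      (∃ q ∈ Q, q.2 = b) ∨ b = c) := by
  have hne : ((r, y) : ℤ × ℤ) ≠ (x, c) := fun h => hrow _ hxy (congrArg Prod.fst h).symm
  refine ⟨isPartialConfig_absorber_swap hQ hrc hxy hd1 hd2 hfree hrow hcol,
    card_erase_union_pair hxy (fun h => hrow _ h rfl) (fun h => hcol _ h rfl) hne,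
    exists_mem_erase_union_pair_iff Prod.fst hxy rfl, fun b => ?_⟩
  rw [pair_comm]
  exact exists_mem_erase_union_pair_iff (u := (x, c)) (v := (r, y)) Prod.snd hxy rfl b
end

section
/- Let P₁, P₂ ⊆ [n]² be partial n-queens configurations with P₂ obtained from P₁ by adding one queen. Then for every (r,c) ∈ [n]², |B_{P₂}(r,c)| ≥ |B_{P₁}(r,c)| - 4. -/
open scoped Classical

/-- The set B_Q(r,c) of absorbers for (r,c) in Q. -/
def absorbers (Q : Finset (ℤ × ℤ)) (r c : ℤ) : Finset (ℤ × ℤ) :=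
  Q.filter (fun p =>
    p.1 + p.2 ≠ r + c ∧ p.1 - p.2 ≠ r - c ∧
    ∀ q ∈ Q, q ≠ p →
      q.1 + q.2 ≠ r + p.2 ∧ q.1 - q.2 ≠ r - p.2 ∧
      q.1 + q.2 ≠ p.1 + c ∧ q.1 - q.2 ≠ p.1 - c)

/-!
An absorber `a` of `Q` stops being one in `insert p Q` only because the new queen `p` lies on a
diagonal through `(r, a.2)` or through `(a.1, c)`. This pins the column `a.2` to one of two values
or the row `a.1` to one of two values, and since the queens of `Q` occupy distinct rows and
columns, at most four absorbers are lost.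
-/

open Finset

theorem IsPartialConfig.injOn_fst {n : ℕ} {Q : Finset (ℤ × ℤ)} (h : IsPartialConfig n Q) :
    Set.InjOn Prod.fst (Q : Set (ℤ × ℤ)) := fun a ha b hb hab =>
  by_contra fun hne => (h.2 a ha b hb hne).1 hab

theorem IsPartialConfig.injOn_snd {n : ℕ} {Q : Finset (ℤ × ℤ)} (h : IsPartialConfig n Q) :
    Set.InjOn Prod.snd (Q : Set (ℤ × ℤ)) := fun a ha b hb hab =>
  by_contra fun hne => (h.2 a ha b hb hne).2.1 hab

theorem Finset.card_filter_mem_le_of_injOn {α β : Type*} [DecidableEq β] {s : Finset α}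
    {f : α → β} (hf : Set.InjOn f s) (t : Finset β) :
    (s.filter (f · ∈ t)).card ≤ t.card :=
  card_le_card_of_injOn f (fun _ ha => (mem_filter.1 ha).2) (hf.mono (filter_subset _ _))

theorem absorbers_sdiff_absorbers_insert_subset (Q : Finset (ℤ × ℤ)) (p : ℤ × ℤ) (r c : ℤ) :
    absorbers Q r c \ absorbers (insert p Q) r c ⊆
      Q.filter (·.2 ∈ ({p.1 + p.2 - r, r - p.1 + p.2} : Finset ℤ)) ∪
        Q.filter (·.1 ∈ ({p.1 + p.2 - c, p.1 - p.2 + c} : Finset ℤ)) := by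
  intro a ha
  obtain ⟨haQ, hsum, hdiff, hfree⟩ := mem_filter.1 (mem_sdiff.1 ha).1
  by_contra hfar
  simp only [mem_union, mem_filter, mem_insert, mem_singleton, not_or, not_and] at hfar
  refine (mem_sdiff.1 ha).2 (mem_filter.2 ⟨mem_insert_of_mem haQ, hsum, hdiff, ?_⟩)
  intro q hq hqa
  rcases mem_insert.1 hq with rfl | hqQ
  · have := hfar.1 haQ
    have := hfar.2 haQ
    omega
  · exact hfree q hqQ hqa

theorem card_absorbers_le_card_absorbers_insert_add_four {Q : Finset (ℤ × ℤ)}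
    (hfst : Set.InjOn Prod.fst (Q : Set (ℤ × ℤ))) (hsnd : Set.InjOn Prod.snd (Q : Set (ℤ × ℤ)))
    (p : ℤ × ℤ) (r c : ℤ) :
    (absorbers Q r c).card ≤ (absorbers (insert p Q) r c).card + 4 := by
  have hlost : (absorbers Q r c \ absorbers (insert p Q) r c).card ≤ 4 :=
    calc _ ≤ _ := card_le_card (absorbers_sdiff_absorbers_insert_subset Q p r c)
      _ ≤ _ := card_union_le _ _
      _ ≤ 2 + 2 := add_le_add
          ((card_filter_mem_le_of_injOn hsnd _).trans card_le_two)
          ((card_filter_mem_le_of_injOn hfst _).trans card_le_two)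
  have := card_le_card_sdiff_add_card (s := absorbers Q r c) (t := absorbers (insert p Q) r c)
  omega

theorem absorbers_add_queen_general (n : ℕ) (P₁ P₂ : Finset (ℤ × ℤ))
    (h₁ : IsPartialConfig n P₁)
    (p : ℤ × ℤ) (hP₂ : P₂ = insert p P₁)
    (r c : ℤ) :
    (absorbers P₁ r c).card - 4 ≤ (absorbers P₂ r c).card := by
  subst hP₂
  have := card_absorbers_le_card_absorbers_insert_add_four h₁.injOn_fst h₁.injOn_snd p r c
  omega

/-- Adding one queen destroys at most four absorbers. -/
theorem absorbers_add_queen (n : ℕ) (P₁ P₂ : Finset (ℤ × ℤ))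
    (h₁ : IsPartialConfig n P₁) (h₂ : IsPartialConfig n P₂)
    (p : ℤ × ℤ) (hp : p ∉ P₁) (hP₂ : P₂ = insert p P₁)
    (r c : ℤ) (hrc : (r, c) ∈ board n) :
    (absorbers P₁ r c).card - 4 ≤ (absorbers P₂ r c).card :=
  absorbers_add_queen_general n P₁ P₂ h₁ p hP₂ r c
end

section
/- Suppose Q ⊆ [n]² is a partial n-queens configuration with |Q| = T that is 10(n-T)-absorbing, i.e., |B_Q(r,c)| ≥ 10(n-T) for every (r,c) ∈ [n]². Then the absorption procedure succeeds: Q can be extended, by k := n-T iterated absorber swaps (each removing one queen and adding two), to an n-queens configuration of size n. More precisely, for any choice of matching between uncovered rows and uncovered columns, at each of the k steps the current configuration has at least one absorber for the current (row, column) pair. -/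
open scoped Classical

/-!
Swapping an absorber for the next pair (uncovered row, uncovered column) covers both and adds a
queen, and it destroys at most 9 absorbers of any square `(r, c)`: the removed queen, and for each
of the two new queens at most four more, since each of its two diagonals meets row `r` and
column `c` in one square each, and a configuration has at most one queen per row and column.
So if every square has at least `9 k` absorbers while `k` swaps remain, this invariant survives
each swap and an absorber is always available.
-/

def Attacks (x y : ℤ × ℤ) : Prop :=
  x.1 = y.1 ∨ x.2 = y.2 ∨ x.1 + x.2 = y.1 + y.2 ∨ x.1 - x.2 = y.1 - y.2

theorem isPartialConfig_iff {n : ℕ} {Q : Finset (ℤ × ℤ)} :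
    IsPartialConfig n Q ↔ Q ⊆ board n ∧ (Q : Set (ℤ × ℤ)).Pairwise fun x y => ¬Attacks x y := by
  simp only [IsPartialConfig, Attacks, not_or]
  rfl

theorem attacks_comm {x y : ℤ × ℤ} : Attacks x y ↔ Attacks y x := by
  unfold Attacks; omega

theorem mem_absorbers {Q : Finset (ℤ × ℤ)} {r c : ℤ} {p : ℤ × ℤ} :
    p ∈ absorbers Q r c ↔ p ∈ Q ∧ p.1 + p.2 ≠ r + c ∧ p.1 - p.2 ≠ r - c ∧
      ∀ q ∈ Q, q ≠ p →
        q.1 + q.2 ≠ r + p.2 ∧ q.1 - q.2 ≠ r - p.2 ∧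
        q.1 + q.2 ≠ p.1 + c ∧ q.1 - q.2 ≠ p.1 - c := by
  simp [absorbers]

def absorberSwap (Q : Finset (ℤ × ℤ)) (p : ℤ × ℤ) (r c : ℤ) : Finset (ℤ × ℤ) :=
  Q.erase p ∪ {(r, p.2), (p.1, c)}

section absorberSwap

variable {Q : Finset (ℤ × ℤ)} {p : ℤ × ℤ} {r c : ℤ}

theorem coe_absorberSwap :
    (absorberSwap Q p r c : Set (ℤ × ℤ)) = insert (r, p.2) (insert (p.1, c) ↑(Q.erase p)) := by
  ext; simp [absorberSwap, or_comm, or_left_comm]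

theorem forall_fst_ne_absorberSwap_iff (hp : p ∈ Q) {a : ℤ} :
    (∀ q ∈ absorberSwap Q p r c, q.1 ≠ a) ↔ (∀ q ∈ Q, q.1 ≠ a) ∧ a ≠ r := by
  simp only [absorberSwap, Finset.mem_union, Finset.mem_erase, Finset.mem_insert,
    Finset.mem_singleton, or_imp, forall_and, forall_eq]
  exact ⟨fun h => ⟨fun q hq => if hqp : q = p then hqp ▸ h.2.2 else h.1 q ⟨hqp, hq⟩, h.2.1.symm⟩,
    fun h => ⟨fun q hq => h.1 q hq.2, Ne.symm h.2, h.1 p hp⟩⟩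

theorem forall_snd_ne_absorberSwap_iff (hp : p ∈ Q) {b : ℤ} :
    (∀ q ∈ absorberSwap Q p r c, q.2 ≠ b) ↔ (∀ q ∈ Q, q.2 ≠ b) ∧ b ≠ c := by
  simp only [absorberSwap, Finset.mem_union, Finset.mem_erase, Finset.mem_insert,
    Finset.mem_singleton, or_imp, forall_and, forall_eq]
  exact ⟨fun h => ⟨fun q hq => if hqp : q = p then hqp ▸ h.2.1 else h.1 q ⟨hqp, hq⟩, h.2.2.symm⟩,
    fun h => ⟨fun q hq => h.1 q hq.2, h.1 p hp, Ne.symm h.2⟩⟩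

theorem card_absorberSwap (hp : p ∈ Q) (hr : ∀ q ∈ Q, q.1 ≠ r) (hc : ∀ q ∈ Q, q.2 ≠ c) :
    (absorberSwap Q p r c).card = Q.card + 1 := by
  have hdisj : Disjoint (Q.erase p) {(r, p.2), (p.1, c)} := by
    simp only [Finset.disjoint_insert_right, Finset.disjoint_singleton_right, Finset.mem_erase]
    exact ⟨fun h => hr _ h.2 rfl, fun h => hc _ h.2 rfl⟩
  have hne : (r, p.2) ≠ (p.1, c) := fun h => hr p hp (congrArg Prod.fst h).symm
  rw [absorberSwap, Finset.card_union_of_disjoint hdisj, Finset.card_erase_of_mem hp,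
    Finset.card_pair hne]
  have := Finset.card_pos.mpr ⟨p, hp⟩
  omega

theorem isPartialConfig_absorberSwap {n : ℕ} (hQ : IsPartialConfig n Q)
    (hp : p ∈ absorbers Q r c) (hrn : r ∈ Finset.Icc 1 (n : ℤ)) (hcn : c ∈ Finset.Icc 1 (n : ℤ))
    (hr : ∀ q ∈ Q, q.1 ≠ r) (hc : ∀ q ∈ Q, q.2 ≠ c) :
    IsPartialConfig n (absorberSwap Q p r c) := by
  obtain ⟨hpQ, hpr, hpc, hfar⟩ := mem_absorbers.mp hp
  rw [isPartialConfig_iff] at hQ ⊢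
  obtain ⟨hboard, hpair⟩ := hQ
  have hpn := hboard hpQ
  simp only [board, Finset.mem_product] at hpn
  refine ⟨?_, ?_⟩
  · intro q hq
    simp only [absorberSwap, Finset.mem_union, Finset.mem_insert, Finset.mem_singleton] at hq
    rcases hq with hq | rfl | rfl
    · exact hboard (Finset.mem_of_mem_erase hq)
    · exact Finset.mem_product.mpr ⟨hrn, hpn.2⟩
    · exact Finset.mem_product.mpr ⟨hpn.1, hcn⟩
  have hnew_old : ∀ q ∈ Q, q ≠ p → ¬Attacks (r, p.2) q ∧ ¬Attacks (p.1, c) q := by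
    intro q hq hqp
    have := hfar q hq hqp
    have hqp' : ¬Attacks q p := hpair hq hpQ hqp
    have := hr q hq
    have := hc q hq
    unfold Attacks at *
    omega
  have hnew_pair : ¬Attacks (r, p.2) (p.1, c) := by
    have := hr p hpQ
    have := hc p hpQ
    unfold Attacks
    omega
  have : Std.Symm fun x y : ℤ × ℤ => ¬Attacks x y := ⟨fun _ _ h => mt attacks_comm.mp h⟩
  rw [coe_absorberSwap, Set.pairwise_insert_of_symm, Set.pairwise_insert_of_symm]
  simp only [Finset.coe_erase, Set.mem_insert_iff, Set.mem_sdiff, Finset.mem_coe,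
    Set.mem_singleton_iff]
  refine ⟨⟨hpair.mono Set.sdiff_subset, fun q hq _ => (hnew_old q hq.1 hq.2).2⟩, ?_⟩
  rintro q (rfl | hq) -
  exacts [hnew_pair, (hnew_old q hq.1 hq.2).1]

end absorberSwap

theorem IsPartialConfig.card_filter_le_one {n : ℕ} {Q : Finset (ℤ × ℤ)} (hQ : IsPartialConfig n Q)
    {P : ℤ × ℤ → Prop} [DecidablePred P]
    (hP : ∀ a ∈ Q, ∀ b ∈ Q, P a → P b → a.1 = b.1 ∨ a.2 = b.2) :
    (Q.filter P).card ≤ 1 := by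
  refine Finset.card_le_one.mpr fun a ha b hb => ?_
  rw [Finset.mem_filter] at ha hb
  by_contra hab
  have := hQ.2 a ha.1 b hb.1 hab
  have := hP a ha.1 b hb.1 ha.2 hb.2
  tauto

/-- The queens that a new queen at `x` stops from absorbing `(r, c)`. -/
def blockedBy (Q : Finset (ℤ × ℤ)) (x : ℤ × ℤ) (r c : ℤ) : Finset (ℤ × ℤ) :=
  Q.filter fun q => x.1 + x.2 = r + q.2 ∨ x.1 - x.2 = r - q.2 ∨
    x.1 + x.2 = q.1 + c ∨ x.1 - x.2 = q.1 - c

theorem IsPartialConfig.card_blockedBy_le {n : ℕ} {Q : Finset (ℤ × ℤ)} (hQ : IsPartialConfig n Q)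
    (x : ℤ × ℤ) (r c : ℤ) : (blockedBy Q x r c).card ≤ 4 := by
  unfold blockedBy
  simp only [Finset.filter_or]
  refine (Finset.card_union_le _ _).trans <| add_le_add (hQ.card_filter_le_one ?_) <|
    (Finset.card_union_le _ _).trans <| add_le_add (hQ.card_filter_le_one ?_) <|
    (Finset.card_union_le _ _).trans <| add_le_add (hQ.card_filter_le_one ?_)
      (hQ.card_filter_le_one ?_) <;>
  intros <;> omega

theorem IsPartialConfig.card_absorbers_le_card_absorbers_absorberSwap {n : ℕ}
    {Q : Finset (ℤ × ℤ)} (hQ : IsPartialConfig n Q) (p : ℤ × ℤ) (r₀ c₀ r c : ℤ) :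
    (absorbers Q r c).card ≤ (absorbers (absorberSwap Q p r₀ c₀) r c).card + 9 := by
  set S := {p} ∪ blockedBy Q (r₀, p.2) r c ∪ blockedBy Q (p.1, c₀) r c
  have hS : S.card ≤ 1 + 4 + 4 :=
    (Finset.card_union_le _ _).trans <| add_le_add
      ((Finset.card_union_le _ _).trans <| add_le_add (Finset.card_singleton p).le
        (hQ.card_blockedBy_le _ _ _))
      (hQ.card_blockedBy_le _ _ _)
  have hsub : absorbers Q r c \ S ⊆ absorbers (absorberSwap Q p r₀ c₀) r c := by
    intro q hq
    simp only [S, blockedBy, Finset.mem_sdiff, Finset.mem_union, Finset.mem_singleton,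
      Finset.mem_filter, mem_absorbers, not_or, not_and] at hq
    obtain ⟨⟨hqQ, hqr, hqc, hfar⟩, ⟨hqp, hq₁⟩, hq₂⟩ := hq
    rw [mem_absorbers]
    refine ⟨by simp [absorberSwap, hqp, hqQ], hqr, hqc, fun q' hq' hq'q => ?_⟩
    simp only [absorberSwap, Finset.mem_union, Finset.mem_erase, Finset.mem_insert,
      Finset.mem_singleton] at hq'
    rcases hq' with ⟨-, hq'Q⟩ | rfl | rfl
    · exact hfar q' hq'Q hq'q
    · have := hq₁ hqQ; omega
    · have := hq₂ hqQ; omega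
  calc (absorbers Q r c).card ≤ (absorbers Q r c \ S).card + S.card :=
        Finset.card_le_card_sdiff_add_card
    _ ≤ _ := add_le_add (Finset.card_le_card hsub) hS

theorem Function.Injective.exists_succ_eq_iff {α : Type*} {k : ℕ} {f : Fin (k + 1) → α}
    (hf : Function.Injective f) {a : α} :
    (∃ i : Fin k, f i.succ = a) ↔ (∃ i, f i = a) ∧ a ≠ f 0 := by
  constructor
  · rintro ⟨i, rfl⟩
    exact ⟨⟨_, rfl⟩, fun h => Fin.succ_ne_zero i (hf h)⟩
  · rintro ⟨⟨i, rfl⟩, h⟩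
    obtain rfl | ⟨j, rfl⟩ := Fin.eq_zero_or_eq_succ i
    exacts [absurd rfl h, ⟨j, rfl⟩]

def IsAbsorptionSequence {k : ℕ} (Q : Finset (ℤ × ℤ)) (r c : Fin k → ℤ)
    (R : Fin (k + 1) → Finset (ℤ × ℤ)) : Prop :=
  R 0 = Q ∧ ∀ i : Fin k, ∃ p ∈ absorbers (R i.castSucc) (r i) (c i),
    R i.succ = absorberSwap (R i.castSucc) p (r i) (c i)

theorem IsAbsorptionSequence.cons {k : ℕ} {Q : Finset (ℤ × ℤ)} {p : ℤ × ℤ}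
    {r c : Fin (k + 1) → ℤ} {R : Fin (k + 1) → Finset (ℤ × ℤ)}
    (hp : p ∈ absorbers Q (r 0) (c 0))
    (hR : IsAbsorptionSequence (absorberSwap Q p (r 0) (c 0)) (Fin.tail r) (Fin.tail c) R) :
    IsAbsorptionSequence Q r c (Fin.cons Q R) := by
  refine ⟨rfl, Fin.cases ⟨p, hp, by simp [hR.1]⟩ fun i => ?_⟩
  simpa [← Fin.succ_castSucc, Fin.tail] using hR.2 i

theorem exists_isAbsorptionSequence {n k : ℕ} {Q : Finset (ℤ × ℤ)} (hQ : IsPartialConfig n Q)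
    (hcard : Q.card + k = n)
    (habs : ∀ a b : ℤ, (a, b) ∈ board n → 9 * k ≤ (absorbers Q a b).card)
    (r c : Fin k → ℤ) (hrinj : Function.Injective r) (hcinj : Function.Injective c)
    (hrmem : ∀ i, r i ∈ Finset.Icc 1 (n : ℤ)) (hcmem : ∀ i, c i ∈ Finset.Icc 1 (n : ℤ))
    (hrcover : ∀ a ∈ Finset.Icc 1 (n : ℤ), ((∀ q ∈ Q, q.1 ≠ a) ↔ ∃ i, r i = a))
    (hccover : ∀ b ∈ Finset.Icc 1 (n : ℤ), ((∀ q ∈ Q, q.2 ≠ b) ↔ ∃ i, c i = b)) :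
    ∃ R, IsAbsorptionSequence Q r c R ∧
      IsPartialConfig n (R (Fin.last k)) ∧ (R (Fin.last k)).card = n := by
  induction k generalizing Q with
  | zero => exact ⟨fun _ => Q, ⟨rfl, fun i => i.elim0⟩, hQ, hcard⟩
  | succ k ih =>
    obtain ⟨p, hp⟩ : (absorbers Q (r 0) (c 0)).Nonempty := by
      have := habs (r 0) (c 0) (Finset.mem_product.mpr ⟨hrmem 0, hcmem 0⟩)
      exact Finset.card_pos.mp (by omega)
    have hpQ := (mem_absorbers.mp hp).1
    have hrfree := (hrcover _ (hrmem 0)).mpr ⟨0, rfl⟩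
    have hcfree := (hccover _ (hcmem 0)).mpr ⟨0, rfl⟩
    obtain ⟨R, hR, hlast, hcard_last⟩ := ih
      (isPartialConfig_absorberSwap hQ hp (hrmem 0) (hcmem 0) hrfree hcfree)
      (by rw [card_absorberSwap hpQ hrfree hcfree]; omega)
      (fun a b hab => by
        have := habs a b hab
        have := hQ.card_absorbers_le_card_absorbers_absorberSwap p (r 0) (c 0) a b
        omega)
      (Fin.tail r) (Fin.tail c) (hrinj.comp (Fin.succ_injective _))
      (hcinj.comp (Fin.succ_injective _)) (fun _ => hrmem _) (fun _ => hcmem _)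
      (fun a ha => by
        rw [forall_fst_ne_absorberSwap_iff hpQ, hrcover a ha, ← hrinj.exists_succ_eq_iff]; rfl)
      (fun b hb => by
        rw [forall_snd_ne_absorberSwap_iff hpQ, hccover b hb, ← hcinj.exists_succ_eq_iff]; rfl)
    exact ⟨Fin.cons Q R, hR.cons hp, hlast, hcard_last⟩

/-- If Q has size T and is 10(n-T)-absorbing, then for any matching of the uncovered rows
with the uncovered columns, the absorption procedure succeeds: there is a sequence of
k = n-T absorber swaps, each step having a nonempty absorber set, ending in a full
n-queens configuration. -/
theorem absorption_succeeds (n T : ℕ) (Q : Finset (ℤ × ℤ))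
    (hQ : IsPartialConfig n Q) (hQcard : Q.card = T) (hT : T ≤ n)
    (habs : ∀ r c : ℤ, (r, c) ∈ board n → 10 * (n - T) ≤ (absorbers Q r c).card)
    (k : ℕ) (hk : k = n - T)
    (r c : Fin k → ℤ)
    (hrinj : Function.Injective r) (hcinj : Function.Injective c)
    (hrmem : ∀ i, r i ∈ Finset.Icc 1 (n : ℤ)) (hcmem : ∀ i, c i ∈ Finset.Icc 1 (n : ℤ))
    (hrcover : ∀ a ∈ Finset.Icc 1 (n : ℤ), ((∀ q ∈ Q, q.1 ≠ a) ↔ ∃ i, r i = a))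
    (hccover : ∀ b ∈ Finset.Icc 1 (n : ℤ), ((∀ q ∈ Q, q.2 ≠ b) ↔ ∃ i, c i = b)) :
    ∃ R : Fin (k + 1) → Finset (ℤ × ℤ), R 0 = Q ∧
      (∀ i : Fin k, ∃ p ∈ absorbers (R i.castSucc) (r i) (c i),
        R i.succ = ((R i.castSucc).erase p) ∪ {(r i, p.2), (p.1, c i)}) ∧
      IsPartialConfig n (R (Fin.last k)) ∧ (R (Fin.last k)).card = n := by
  obtain ⟨R, ⟨hR₀, hswaps⟩, hlast, hcard_last⟩ :=
    exists_isAbsorptionSequence hQ (by omega)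
      (fun a b hab => (habs a b hab).trans' (by omega)) r c hrinj hcinj hrmem hcmem
      hrcover hccover
  exact ⟨R, hR₀, hswaps, hlast, hcard_last⟩
end

section
/- Let Q₁ ⊆ Q₂ ⊆ [n]² be partial toroidal n-queens configurations. Then for every (r,c) ∈ [n]², every safe absorber for (r,c) in Q₁ is a safe absorber for (r,c) in Q₂; i.e., S_{Q₁}(r,c) ⊆ S_{Q₂}(r,c). -/
open scoped Classical

/-- A partial toroidal n-queens configuration: at most one queen in each row, column,
and toroidal diagonal. -/
def IsPartialTorConfig (n : ℕ) (Q : Finset (ℤ × ℤ)) : Prop :=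
  Q ⊆ board n ∧ ∀ p ∈ Q, ∀ q ∈ Q, p ≠ q →
    p.1 ≠ q.1 ∧ p.2 ≠ q.2 ∧ ¬ (p.1 + p.2 ≡ q.1 + q.2 [ZMOD (n : ℤ)]) ∧
    ¬ (p.1 - p.2 ≡ q.1 - q.2 [ZMOD (n : ℤ)])

/-- The set S_Q(r,c) of safe absorbers for (r,c) in Q: absorbers such that all four
toroidal diagonals through (r,y) and (x,c) are occupied by Q outside the corresponding
non-toroidal diagonals. -/
def safeAbsorbers (n : ℕ) (Q : Finset (ℤ × ℤ)) (r c : ℤ) : Finset (ℤ × ℤ) :=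
  Q.filter (fun p =>
    p.1 + p.2 ≠ r + c ∧ p.1 - p.2 ≠ r - c ∧
    (∀ q ∈ Q, q ≠ p →
      q.1 + q.2 ≠ r + p.2 ∧ q.1 - q.2 ≠ r - p.2 ∧
      q.1 + q.2 ≠ p.1 + c ∧ q.1 - q.2 ≠ p.1 - c) ∧
    (∃ a ∈ Q, a.1 + a.2 ≡ r + p.2 [ZMOD (n : ℤ)] ∧ a.1 + a.2 ≠ r + p.2) ∧
    (∃ a ∈ Q, a.1 - a.2 ≡ r - p.2 [ZMOD (n : ℤ)] ∧ a.1 - a.2 ≠ r - p.2) ∧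
    (∃ a ∈ Q, a.1 + a.2 ≡ p.1 + c [ZMOD (n : ℤ)] ∧ a.1 + a.2 ≠ p.1 + c) ∧
    (∃ a ∈ Q, a.1 - a.2 ≡ p.1 - c [ZMOD (n : ℤ)] ∧ a.1 - a.2 ≠ p.1 - c))

/-! Every condition defining a safe absorber is monotone in `Q` except the emptiness of the four
non-toroidal diagonals through `(r, y)` and `(x, c)`. Each of these lies on a toroidal diagonal
that safety already occupies by a queen of `Q₁` off it, so a queen of the larger configuration
`Q₂` on it would share that toroidal diagonal with a different queen. -/

namespace IsPartialTorConfig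

variable {n : ℕ} {Q : Finset (ℤ × ℤ)} {a q : ℤ × ℤ} {s : ℤ}

theorem add_ne_of_modEq (hQ : IsPartialTorConfig n Q) (ha : a ∈ Q) (hq : q ∈ Q)
    (has : a.1 + a.2 ≡ s [ZMOD n]) (hne : a.1 + a.2 ≠ s) : q.1 + q.2 ≠ s := by
  rintro rfl
  exact (hQ.2 a ha q hq fun h => hne (h ▸ rfl)).2.2.1 has

theorem sub_ne_of_modEq (hQ : IsPartialTorConfig n Q) (ha : a ∈ Q) (hq : q ∈ Q)
    (has : a.1 - a.2 ≡ s [ZMOD n]) (hne : a.1 - a.2 ≠ s) : q.1 - q.2 ≠ s := by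
  rintro rfl
  exact (hQ.2 a ha q hq fun h => hne (h ▸ rfl)).2.2.2 has

end IsPartialTorConfig

theorem safe_absorbers_survive_general (n : ℕ) (Q₁ Q₂ : Finset (ℤ × ℤ))
    (h₂ : IsPartialTorConfig n Q₂) (hsub : Q₁ ⊆ Q₂) (r c : ℤ) :
    safeAbsorbers n Q₁ r c ⊆ safeAbsorbers n Q₂ r c := by
  intro p hp
  simp only [safeAbsorbers, Finset.mem_filter] at hp ⊢
  obtain ⟨hpQ, hsum, hdiff, -, ⟨a₁, ha₁, hm₁, hn₁⟩, ⟨a₂, ha₂, hm₂, hn₂⟩, ⟨a₃, ha₃, hm₃, hn₃⟩,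
    ⟨a₄, ha₄, hm₄, hn₄⟩⟩ := hp
  refine ⟨hsub hpQ, hsum, hdiff, fun q hq _ => ⟨?_, ?_, ?_, ?_⟩, ⟨a₁, hsub ha₁, hm₁, hn₁⟩,
    ⟨a₂, hsub ha₂, hm₂, hn₂⟩, ⟨a₃, hsub ha₃, hm₃, hn₃⟩, ⟨a₄, hsub ha₄, hm₄, hn₄⟩⟩
  · exact h₂.add_ne_of_modEq (hsub ha₁) hq hm₁ hn₁
  · exact h₂.sub_ne_of_modEq (hsub ha₂) hq hm₂ hn₂
  · exact h₂.add_ne_of_modEq (hsub ha₃) hq hm₃ hn₃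
  · exact h₂.sub_ne_of_modEq (hsub ha₄) hq hm₄ hn₄

/-- Safe absorbers survive: if Q₁ ⊆ Q₂ then S_{Q₁}(r,c) ⊆ S_{Q₂}(r,c). -/
theorem safe_absorbers_survive (n : ℕ) (Q₁ Q₂ : Finset (ℤ × ℤ))
    (h₁ : IsPartialTorConfig n Q₁) (h₂ : IsPartialTorConfig n Q₂) (hsub : Q₁ ⊆ Q₂)
    (r c : ℤ) (hrc : (r, c) ∈ board n) :
    safeAbsorbers n Q₁ r c ⊆ safeAbsorbers n Q₂ r c :=
  safe_absorbers_survive_general n Q₁ Q₂ h₂ hsub r c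
end

section
/- Let R ⊆ [n]² and let R̃ ⊆ R be the set of positions in R that share no row, column, or toroidal diagonal with any other element of R. If R' = R ∪ {(x,y)} for some position (x,y), then the corresponding set R̃' satisfies |R̃ Δ R̃'| ≤ 5; in particular, adding a single point to R changes R̃ by at most 4 removals and 1 addition. -/
open scoped Classical

/-- Two positions share a line (row, column, or toroidal diagonal). -/
def sharesLine (n : ℕ) (p q : ℤ × ℤ) : Prop :=
  p.1 = q.1 ∨ p.2 = q.2 ∨ p.1 + p.2 ≡ q.1 + q.2 [ZMOD (n : ℤ)] ∨
    p.1 - p.2 ≡ q.1 - q.2 [ZMOD (n : ℤ)]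

/-- R̃: the elements of R threatened by no other element of R. -/
noncomputable def unthreatened (n : ℕ) (R : Finset (ℤ × ℤ)) : Finset (ℤ × ℤ) :=
  R.filter (fun p => ∀ q ∈ R, q ≠ p → ¬ sharesLine n q p)

/-! A point of R̃ that leaves when `p` is added must be threatened by `p`, so it lies on one of
the four lines through `p`; any two points of a line threaten each other, so each line holds at
most one point of R̃. The only point that can join R̃ is `p` itself. -/

open Finset

variable {n : ℕ} {R : Finset (ℤ × ℤ)}

lemma not_sharesLine_of_mem_unthreatened {p q : ℤ × ℤ} (hp : p ∈ unthreatened n R) (hq : q ∈ R)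
    (hne : q ≠ p) : ¬ sharesLine n q p :=
  (mem_filter.1 hp).2 q hq hne

lemma unthreatened_insert_sdiff_subset (p : ℤ × ℤ) :
    unthreatened n (insert p R) \ unthreatened n R ⊆ {p} := by
  intro q hq
  obtain ⟨hq_new, hq_old⟩ := mem_sdiff.1 hq
  obtain ⟨hq_mem, hq_free⟩ := mem_filter.1 hq_new
  rcases mem_insert.1 hq_mem with rfl | hqR
  · exact mem_singleton_self q
  · exact absurd (mem_filter.2 ⟨hqR, fun r hr => hq_free r (mem_insert_of_mem hr)⟩) hq_old

lemma sharesLine_of_mem_unthreatened_sdiff_insert {p q : ℤ × ℤ}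
    (hq : q ∈ unthreatened n R \ unthreatened n (insert p R)) : sharesLine n p q := by
  obtain ⟨hq_old, hq_new⟩ := mem_sdiff.1 hq
  have hqR : q ∈ R := (mem_filter.1 hq_old).1
  by_contra hpq
  refine hq_new (mem_filter.2 ⟨mem_insert_of_mem hqR, fun r hr hrq => ?_⟩)
  rcases mem_insert.1 hr with rfl | hrR
  · exact hpq
  · exact not_sharesLine_of_mem_unthreatened hq_old hrR hrq

lemma card_filter_unthreatened_le_one (P : ℤ × ℤ → Prop) [DecidablePred P]
    (hP : ∀ a b, P a → P b → sharesLine n a b) : ((unthreatened n R).filter P).card ≤ 1 := by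
  refine card_le_one.2 fun a ha b hb => by_contra fun hne => ?_
  obtain ⟨haS, hPa⟩ := mem_filter.1 ha
  obtain ⟨hbS, hPb⟩ := mem_filter.1 hb
  exact not_sharesLine_of_mem_unthreatened hbS (mem_filter.1 haS).1 hne (hP a b hPa hPb)

lemma card_filter_sharesLine_unthreatened_le_four (p : ℤ × ℤ) :
    ((unthreatened n R).filter (sharesLine n p)).card ≤ 4 := by
  set S := unthreatened n R
  have hsplit : S.filter (sharesLine n p) =
      S.filter (fun q => p.1 = q.1) ∪ S.filter (fun q => p.2 = q.2) ∪
        S.filter (fun q => p.1 + p.2 ≡ q.1 + q.2 [ZMOD n]) ∪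
        S.filter (fun q => p.1 - p.2 ≡ q.1 - q.2 [ZMOD n]) := by
    ext q
    simp only [sharesLine, mem_filter, mem_union]
    tauto
  have hrow := card_filter_unthreatened_le_one (n := n) (R := R) (fun q => p.1 = q.1)
    fun a b ha hb => Or.inl (ha.symm.trans hb)
  have hcol := card_filter_unthreatened_le_one (n := n) (R := R) (fun q => p.2 = q.2)
    fun a b ha hb => Or.inr (Or.inl (ha.symm.trans hb))
  have hsum := card_filter_unthreatened_le_one (n := n) (R := R)
    (fun q => p.1 + p.2 ≡ q.1 + q.2 [ZMOD n])
    fun a b ha hb => Or.inr (Or.inr (Or.inl (ha.symm.trans hb)))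
  have hdiff := card_filter_unthreatened_le_one (n := n) (R := R)
    (fun q => p.1 - p.2 ≡ q.1 - q.2 [ZMOD n])
    fun a b ha hb => Or.inr (Or.inr (Or.inr (ha.symm.trans hb)))
  rw [hsplit]
  calc _ ≤ 1 + 1 + 1 + 1 := by
        grw [card_union_le, card_union_le, card_union_le, hrow, hcol, hsum, hdiff]
    _ = 4 := rfl

lemma card_unthreatened_sdiff_insert_le_four (p : ℤ × ℤ) :
    (unthreatened n R \ unthreatened n (insert p R)).card ≤ 4 :=
  (card_le_card fun _ hq =>
    mem_filter.2 ⟨(mem_sdiff.1 hq).1, sharesLine_of_mem_unthreatened_sdiff_insert hq⟩).trans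
    (card_filter_sharesLine_unthreatened_le_four p)

lemma card_unthreatened_insert_sdiff_le_one (p : ℤ × ℤ) :
    (unthreatened n (insert p R) \ unthreatened n R).card ≤ 1 :=
  (card_le_card (unthreatened_insert_sdiff_subset p)).trans (card_singleton p).le

theorem unthreatened_lipschitz_general (n : ℕ) (R : Finset (ℤ × ℤ))
    (x y : ℤ) :
    ((unthreatened n R \ unthreatened n (insert (x, y) R)) ∪
      (unthreatened n (insert (x, y) R) \ unthreatened n R)).card ≤ 5 ∧
    (unthreatened n R \ unthreatened n (insert (x, y) R)).card ≤ 4 ∧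
    (unthreatened n (insert (x, y) R) \ unthreatened n R).card ≤ 1 := by
  have hremoved := card_unthreatened_sdiff_insert_le_four (n := n) (R := R) (x, y)
  have hadded := card_unthreatened_insert_sdiff_le_one (n := n) (R := R) (x, y)
  refine ⟨?_, hremoved, hadded⟩
  grw [card_union_le]
  omega

/-- Adding one point to R changes R̃ by at most 4 removals and 1 addition,
hence by at most 5 in symmetric difference. -/
theorem unthreatened_lipschitz (n : ℕ) (R : Finset (ℤ × ℤ)) (hR : R ⊆ board n)
    (x y : ℤ) (hxy : (x, y) ∈ board n) :
    ((unthreatened n R \ unthreatened n (insert (x, y) R)) ∪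
      (unthreatened n (insert (x, y) R) \ unthreatened n R)).card ≤ 5 ∧
    (unthreatened n R \ unthreatened n (insert (x, y) R)).card ≤ 4 ∧
    (unthreatened n (insert (x, y) R) \ unthreatened n R).card ≤ 1 :=
  unthreatened_lipschitz_general n R x y
end
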